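/- Let n ≥ 2 be an integer and let c ∈ (0,1). There exists c′ > 0, depending only on n and c, with the following property: for every Lebesgue-measurable set E ⊆ ℝⁿ with 0 < λ(E) < ∞, if there exists a convex set F ⊆ ℝⁿ with c·λ(F) ≤ λ(E) ≤ c^{−1}·λ(E ∩ F), then J_n(E) ≥ c′·λ(E)². -/

import Mathlib

open MeasureTheory
open scoped ENNReal

noncomputable section

/-- `Jn n E` is the `(n+1)`-st power of the `L^{n+1}` norm of the X-ray transform of the
indicator of `E`: the integral over directions `ξ` in the unit sphere (with the standard
unnormalized surface measure `volume.toSphere`) and points `x ∈ E` of the `n`-th power of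
the length of the chord of `E` through `x` in direction `ξ`. -/
def Jn (n : ℕ) (E : Set (EuclideanSpace ℝ (Fin n))) : ℝ≥0∞ :=
  ∫⁻ ξ : Metric.sphere (0 : EuclideanSpace ℝ (Fin n)) 1,
    (∫⁻ x in E, (volume {t : ℝ | x + t • (ξ : EuclideanSpace ℝ (Fin n)) ∈ E}) ^ n)
    ∂((volume : Measure (EuclideanSpace ℝ (Fin n))).toSphere)

/-!
If `x` and `x + tξ` both lie in the convex set `F`, so does the segment between them, hence
`tⁿ ≤ n · P(x, ξ)` where `P(x, ξ) = ∫₀^∞ sⁿ⁻¹ 1_F(x + sξ) ds` (`radialMass F x ξ`) is the mass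
of `F` seen from `x` in direction `ξ` in polar coordinates. Writing `λ(E ∩ F)²` in polar coordinates around each point of
`E ∩ F` and bounding the weight `tⁿ⁻¹` by `(n P)^((n-1)/n)`, Hölder's inequality with exponents
`n/(n-1)` and `n` on (directions) × `E ∩ F` gives `λ(E ∩ F)^(2n) ≤ (n λ(F)²)ⁿ⁻¹ J_n(E)`.
With `λ(E ∩ F) ≥ c λ(E)` and `λ(F) ≤ λ(E)/c` this is `J_n(E) ≥ c^(4n-2) n^(1-n) λ(E)²`.
Replacing `F` by its interior, which differs from `F` by a null set, makes `F` measurable.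
-/

open Measure Set Metric

local notation "dim" => Module.finrank ℝ

section

variable {V : Type*} [NormedAddCommGroup V] [NormedSpace ℝ V] [FiniteDimensional ℝ V]

def radialMass (A : Set V) (x ξ : V) : ℝ≥0∞ :=
  ∫⁻ t in Ioi (0 : ℝ), ENNReal.ofReal (t ^ (dim V - 1)) * A.indicator 1 (x + t • ξ)

def chordLength (A : Set V) (x ξ : V) : ℝ≥0∞ :=
  volume {t : ℝ | x + t • ξ ∈ A}

theorem ofReal_pow_le_radialMass [Nontrivial V] {F : Set V} {x ξ : V} {t : ℝ} (ht : 0 ≤ t)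
    (hseg : ∀ s ∈ Ioc 0 t, x + s • ξ ∈ F) :
    ENNReal.ofReal (t ^ dim V) ≤ dim V * radialMass F x ξ := by
  have hd : 0 < dim V := Module.finrank_pos
  have hmass : ENNReal.ofReal (t ^ dim V / dim V) ≤ radialMass F x ξ :=
    calc ENNReal.ofReal (t ^ dim V / dim V)
        = ∫⁻ s in Ioc 0 t, ENNReal.ofReal (s ^ (dim V - 1)) := by
          rw [← ofReal_integral_eq_lintegral_ofReal (intervalIntegral.intervalIntegrable_pow _).1
            (ae_restrict_of_forall_mem measurableSet_Ioc fun s hs => pow_nonneg hs.1.le _),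
            ← intervalIntegral.integral_of_le ht, integral_pow, Nat.sub_add_cancel hd,
            Nat.cast_pred hd, sub_add_cancel, zero_pow hd.ne', sub_zero]
      _ = ∫⁻ s in Ioc 0 t, ENNReal.ofReal (s ^ (dim V - 1)) * F.indicator 1 (x + s • ξ) :=
          setLIntegral_congr_fun measurableSet_Ioc fun s hs => by
            simp [indicator_of_mem (hseg s hs)]
      _ ≤ radialMass F x ξ := lintegral_mono_set Ioc_subset_Ioi_self
  calc ENNReal.ofReal (t ^ dim V) = dim V * ENNReal.ofReal (t ^ dim V / dim V) := by
        rw [← ENNReal.ofReal_natCast, ← ENNReal.ofReal_mul (by positivity),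
          mul_div_cancel₀ _ (by positivity)]
    _ ≤ dim V * radialMass F x ξ := by gcongr

theorem Convex.ofReal_pow_le_radialMass [Nontrivial V] {F : Set V} (hF : Convex ℝ F) {x ξ : V}
    {t : ℝ} (ht : 0 < t) (hx : x ∈ F) (hxt : x + t • ξ ∈ F) :
    ENNReal.ofReal (t ^ dim V) ≤ dim V * radialMass F x ξ := by
  refine _root_.ofReal_pow_le_radialMass ht.le fun s hs => ?_
  have := hF.add_smul_mem hx hxt ⟨div_nonneg hs.1.le ht.le, (div_le_one ht).2 hs.2⟩
  rwa [smul_smul, div_mul_cancel₀ _ ht.ne'] at this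

variable [MeasurableSpace V] [BorelSpace V]

theorem lintegral_eq_lintegral_sphere_Ioi [Nontrivial V] (μ : Measure V) [μ.IsAddHaarMeasure]
    {g : V → ℝ≥0∞} (hg : Measurable g) :
    ∫⁻ y, g y ∂μ = ∫⁻ ξ : sphere (0 : V) 1, ∫⁻ t in Ioi (0 : ℝ),
      ENNReal.ofReal (t ^ (dim V - 1)) * g (t • (ξ : V)) ∂volume ∂μ.toSphere := by
  have hg' : Measurable fun p : sphere (0 : V) 1 × Ioi (0 : ℝ) => g ((p.2 : ℝ) • (p.1 : V)) :=
    hg.comp (by fun_prop)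
  calc ∫⁻ y, g y ∂μ = ∫⁻ y : ({0}ᶜ : Set V), g y ∂μ.comap Subtype.val := by
        rw [lintegral_subtype_comap (measurableSet_singleton 0).compl,
          restrict_compl_singleton]
    _ = ∫⁻ p : sphere (0 : V) 1 × Ioi (0 : ℝ), g ((p.2 : ℝ) • (p.1 : V))
          ∂μ.toSphere.prod (volumeIoiPow (dim V - 1)) := by
        rw [← (μ.measurePreserving_homeomorphUnitSphereProd).lintegral_comp hg']
        congr! with y
        simp [smul_inv_smul₀ (norm_ne_zero_iff.2 y.2)]
    _ = _ := by
        rw [lintegral_prod _ hg'.aemeasurable]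
        refine lintegral_congr fun ξ => ?_
        rw [Measure.volumeIoiPow,
          lintegral_withDensity_eq_lintegral_mul _ (by fun_prop) (by fun_prop),
          ← lintegral_subtype_comap measurableSet_Ioi]
        rfl

theorem measurable_radialMass {A : Set V} (hA : MeasurableSet A) :
    Measurable fun q : V × V => radialMass A q.1 q.2 :=
  Measurable.lintegral_prod_right' (f := fun r : (V × V) × ℝ =>
    ENNReal.ofReal (r.2 ^ (dim V - 1)) * A.indicator 1 (r.1.1 + r.2 • r.1.2))
    ((by fun_prop : Measurable fun r : (V × V) × ℝ => ENNReal.ofReal (r.2 ^ (dim V - 1))).mul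
      ((measurable_one.indicator hA).comp (by fun_prop)))

theorem measurable_chordLength {A : Set V} (hA : MeasurableSet A) :
    Measurable fun q : V × V => chordLength A q.1 q.2 :=
  measurable_measure_prodMk_left
    (hA.preimage (by fun_prop : Measurable fun r : (V × V) × ℝ => r.1.1 + r.2 • r.1.2))

theorem lintegral_toSphere_radialMass [Nontrivial V] (μ : Measure V) [μ.IsAddHaarMeasure]
    {A : Set V} (hA : MeasurableSet A) (x : V) :
    ∫⁻ ξ : sphere (0 : V) 1, radialMass A x ξ ∂μ.toSphere = μ A := by
  rw [← lintegral_indicator_one hA, ← lintegral_add_left_eq_self _ x,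
    lintegral_eq_lintegral_sphere_Ioi μ (g := fun y => A.indicator 1 (x + y))
      ((measurable_one.indicator hA).comp (measurable_const_add x))]
  rfl

theorem lintegral_radialMass_prod_restrict [Nontrivial V] (μ : Measure V) [μ.IsAddHaarMeasure]
    {A B : Set V} (hB : MeasurableSet B) :
    ∫⁻ p, radialMass B p.2 p.1 ∂μ.toSphere.prod (μ.restrict A) = μ A * μ B := by
  have hm : Measurable fun p : sphere (0 : V) 1 × V => radialMass B p.2 p.1 :=
    (measurable_radialMass hB).comp
      (by fun_prop : Measurable fun p : sphere (0 : V) 1 × V => (p.2, (p.1 : V)))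
  rw [lintegral_prod_symm _ hm.aemeasurable]
  simp_rw [lintegral_toSphere_radialMass μ hB]
  rw [setLIntegral_const, mul_comm]

theorem Convex.radialMass_inter_le [Nontrivial V] {E F : Set V} (hF : Convex ℝ F)
    (hE : MeasurableSet E) {x ξ : V} (hx : x ∈ F) :
    radialMass (E ∩ F) x ξ ≤
      (dim V * radialMass F x ξ) ^ (((dim V : ℝ) - 1) / dim V) * chordLength E x ξ := by
  set C := (dim V * radialMass F x ξ) ^ (((dim V : ℝ) - 1) / dim V)
  have hd : 0 < dim V := Module.finrank_pos
  have hr : 0 ≤ ((dim V : ℝ) - 1) / dim V := by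
    have : (1 : ℝ) ≤ dim V := by exact_mod_cast hd
    exact div_nonneg (by linarith) (by positivity)
  have hweight : ∀ t, 0 < t → x + t • ξ ∈ F → ENNReal.ofReal (t ^ (dim V - 1)) ≤ C := by
    intro t ht hxt
    calc ENNReal.ofReal (t ^ (dim V - 1))
        = ENNReal.ofReal (t ^ dim V) ^ (((dim V : ℝ) - 1) / dim V) := by
          rw [ENNReal.ofReal_rpow_of_nonneg (by positivity) hr, ← Real.rpow_natCast t (dim V),
            ← Real.rpow_mul ht.le, mul_div_cancel₀ _ (by positivity), ← Nat.cast_pred hd,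
            Real.rpow_natCast]
      _ ≤ C := ENNReal.rpow_le_rpow (hF.ofReal_pow_le_radialMass ht hx hxt) hr
  have hline : MeasurableSet {t : ℝ | x + t • ξ ∈ E} := hE.preimage (by fun_prop)
  calc radialMass (E ∩ F) x ξ
      ≤ ∫⁻ t in Ioi 0, C * {t : ℝ | x + t • ξ ∈ E}.indicator 1 t :=
        setLIntegral_mono' measurableSet_Ioi fun t ht => by
          by_cases hxt : x + t • ξ ∈ E ∩ F
          · simpa [indicator_of_mem hxt, hxt.1] using hweight t ht hxt.2
          · simp [indicator_of_notMem hxt]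
    _ ≤ ∫⁻ t, C * {t : ℝ | x + t • ξ ∈ E}.indicator 1 t := setLIntegral_le_lintegral _ _
    _ = C * chordLength E x ξ := by
        rw [lintegral_const_mul _ (measurable_one.indicator hline), lintegral_indicator_one hline]
        rfl

theorem ENNReal.pow_le_of_le_rpow_mul_rpow {a b c : ℝ≥0∞} {d : ℕ} (hd : 1 < d)
    (h : a ≤ b ^ (((d : ℝ) - 1) / d) * c ^ (1 / (d : ℝ))) : a ^ d ≤ b ^ (d - 1) * c := by
  have hd0 : (d : ℝ) ≠ 0 := by positivity
  calc a ^ d ≤ (b ^ (((d : ℝ) - 1) / d) * c ^ (1 / (d : ℝ))) ^ d := by gcongr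
    _ = b ^ (d - 1) * c := by
        rw [mul_pow, ← ENNReal.rpow_natCast, ← ENNReal.rpow_natCast (_ ^ _), ← ENNReal.rpow_mul,
          ← ENNReal.rpow_mul, div_mul_cancel₀ _ hd0, one_div_mul_cancel hd0, ENNReal.rpow_one,
          ← Nat.cast_pred (by omega), ENNReal.rpow_natCast]

def xrayEnergy (μ : Measure V) (E : Set V) : ℝ≥0∞ :=
  ∫⁻ ξ : sphere (0 : V) 1, ∫⁻ x in E, chordLength E x ξ ^ dim V ∂μ ∂μ.toSphere

theorem Convex.measure_inter_pow_le (μ : Measure V) [μ.IsAddHaarMeasure] (hd : 1 < dim V)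
    {E F : Set V} (hF : Convex ℝ F) (hE : MeasurableSet E) (hFm : MeasurableSet F) :
    μ (E ∩ F) ^ (2 * dim V) ≤ (dim V * μ F ^ 2) ^ (dim V - 1) * xrayEnergy μ E := by
  have : Nontrivial V := Module.nontrivial_of_finrank_pos (by omega : 0 < dim V)
  set d := dim V
  have hd' : (1 : ℝ) < d := by exact_mod_cast hd
  have hpq : (Real.conjExponent d).HolderConjugate d :=
    (Real.HolderConjugate.conjExponent hd').symm
  have hexp : (Real.conjExponent d)⁻¹ = ((d : ℝ) - 1) / d := by
    rw [Real.conjExponent, inv_div]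
  set ν := μ.toSphere.prod (μ.restrict (E ∩ F))
  set f : sphere (0 : V) 1 × V → ℝ≥0∞ :=
    fun p => (d * radialMass F p.2 p.1) ^ (Real.conjExponent d)⁻¹
  set g : sphere (0 : V) 1 × V → ℝ≥0∞ := fun p => chordLength E p.2 p.1
  have hswap : Measurable fun p : sphere (0 : V) 1 × V => (p.2, (p.1 : V)) := by fun_prop
  have hf : Measurable f := ((measurable_radialMass hFm).comp hswap).const_mul _ |>.pow_const _
  have hg : Measurable g := (measurable_chordLength hE).comp hswap
  have hmem : ∀ᵐ p ∂ν, p.2 ∈ E ∩ F :=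
    (ae_prod_mem_iff_ae_ae_mem (measurable_snd (hE.inter hFm))).2
      (ae_of_all _ fun _ => ae_restrict_mem (hE.inter hFm))
  have hf_pow : ∫⁻ p, f p ^ Real.conjExponent d ∂ν ≤ d * μ F ^ 2 := by
    simp_rw [f, ENNReal.rpow_inv_rpow hpq.pos.ne']
    rw [lintegral_const_mul' _ _ (ENNReal.natCast_ne_top d),
      lintegral_radialMass_prod_restrict μ hFm, sq]
    gcongr
    exact inter_subset_right
  have hg_pow : ∫⁻ p, g p ^ (d : ℝ) ∂ν ≤ xrayEnergy μ E := by
    simp_rw [g, ENNReal.rpow_natCast]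
    rw [lintegral_prod _ (hg.pow_const _).aemeasurable]
    exact lintegral_mono fun ξ => lintegral_mono_set inter_subset_left
  have hsq : μ (E ∩ F) ^ 2 ≤
      (d * μ F ^ 2) ^ (((d : ℝ) - 1) / d) * xrayEnergy μ E ^ (1 / (d : ℝ)) :=
    calc μ (E ∩ F) ^ 2 = ∫⁻ p, radialMass (E ∩ F) p.2 p.1 ∂ν := by
          rw [lintegral_radialMass_prod_restrict μ (hE.inter hFm), sq]
      _ ≤ ∫⁻ p, (f * g) p ∂ν := lintegral_mono_ae <| hmem.mono fun p hp =>
          hF.radialMass_inter_le hE hp.2 |>.trans_eq (by rw [← hexp]; rfl)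
      _ ≤ (∫⁻ p, f p ^ Real.conjExponent d ∂ν) ^ (1 / Real.conjExponent d) *
            (∫⁻ p, g p ^ (d : ℝ) ∂ν) ^ (1 / (d : ℝ)) :=
          ENNReal.lintegral_mul_le_Lp_mul_Lq ν hpq hf.aemeasurable hg.aemeasurable
      _ ≤ _ := by
          rw [one_div, hexp]
          gcongr
  simpa [← pow_mul, mul_comm 2] using ENNReal.pow_le_of_le_rpow_mul_rpow hd hsq

end

theorem ENNReal.pow_mul_sq_le_of_pow_le {k a b v J : ℝ≥0∞} {d : ℕ} (hd : 1 ≤ d) (hv0 : v ≠ 0)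
    (hv : v ≠ ⊤) (hka : k * v ≤ a) (hkb : k * b ≤ v)
    (h : a ^ (2 * d) ≤ (d * b ^ 2) ^ (d - 1) * J) :
    k ^ (4 * d - 2) * v ^ 2 ≤ d ^ (d - 1) * J := by
  obtain ⟨m, rfl⟩ : ∃ m, d = m + 1 := ⟨d - 1, by omega⟩
  rw [Nat.add_sub_cancel] at h ⊢
  rw [← ENNReal.mul_le_mul_iff_left (pow_ne_zero (2 * m) hv0) (pow_ne_top hv)]
  calc k ^ (4 * (m + 1) - 2) * v ^ 2 * v ^ (2 * m)
        = k ^ (2 * m) * (k * v) ^ (2 * (m + 1)) := by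
        rw [show 4 * (m + 1) - 2 = 2 * m + 2 * (m + 1) by omega]
        ring
    _ ≤ k ^ (2 * m) * ((↑(m + 1) * b ^ 2) ^ m * J) := by
        gcongr
        exact (pow_le_pow_left' hka _).trans h
    _ = ↑(m + 1) ^ m * (k * b) ^ (2 * m) * J := by ring
    _ ≤ ↑(m + 1) ^ m * v ^ (2 * m) * J := by gcongr
    _ = ↑(m + 1) ^ m * J * v ^ (2 * m) := by ring

theorem Jn_eq_xrayEnergy (n : ℕ) (E : Set (EuclideanSpace ℝ (Fin n))) :
    Jn n E = xrayEnergy volume E := by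
  rw [xrayEnergy, finrank_euclideanSpace_fin]
  rfl

/-- near-convexity implies the convexity index is bounded below. -/
theorem statement14 (n : ℕ) (hn : 2 ≤ n) (c : ℝ) (hc : c ∈ Set.Ioo (0 : ℝ) 1) :
    ∃ c' : ℝ, 0 < c' ∧
      ∀ E : Set (EuclideanSpace ℝ (Fin n)), MeasurableSet E →
        0 < volume E → volume E < ⊤ →
        (∃ F : Set (EuclideanSpace ℝ (Fin n)), Convex ℝ F ∧
          ENNReal.ofReal c * volume F ≤ volume E ∧
          volume E ≤ ENNReal.ofReal c⁻¹ * volume (E ∩ F)) →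
        ENNReal.ofReal c' * (volume E) ^ 2 ≤ Jn n E := by
  obtain ⟨hc0, -⟩ := hc
  refine ⟨c ^ (4 * n - 2) / n ^ (n - 1), by positivity, ?_⟩
  rintro E hE hE0 hEtop ⟨F, hF, hFE, hEF⟩
  have hfrontier : volume (frontier F) = 0 := hF.addHaar_frontier volume
  have hkey := hF.interior.measure_inter_pow_le volume
    (by rw [finrank_euclideanSpace_fin]; omega) hE isOpen_interior.measurableSet
  rw [measure_interior_of_null_frontier hfrontier,
    measure_congr ((ae_eq_refl E).inter (interior_ae_eq_of_null_frontier hfrontier)),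
    finrank_euclideanSpace_fin, ← Jn_eq_xrayEnergy] at hkey
  have hka : ENNReal.ofReal c * volume E ≤ volume (E ∩ F) :=
    calc ENNReal.ofReal c * volume E
        ≤ ENNReal.ofReal c * (ENNReal.ofReal c⁻¹ * volume (E ∩ F)) := by gcongr
      _ = volume (E ∩ F) := by
          rw [← mul_assoc, ← ENNReal.ofReal_mul hc0.le, mul_inv_cancel₀ hc0.ne',
            ENNReal.ofReal_one, one_mul]
  rw [ENNReal.ofReal_div_of_pos (by positivity), ENNReal.ofReal_pow hc0.le,
    ENNReal.ofReal_pow (by positivity), ENNReal.ofReal_natCast, ← ENNReal.mul_div_right_comm]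
  exact ENNReal.div_le_of_le_mul'
    (ENNReal.pow_mul_sq_le_of_pow_le (by omega) hE0.ne' hEtop.ne hka hFE hkey)
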